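/- Let p be prime, let C ⊆ Z_p^{2n} be a linear subspace, and let λ : C → ℂ be a function. Suppose ψ, ψ′ ∈ ℂ^{p^n} both satisfy XZ(c)ψ = λ(c)ψ and XZ(c)ψ′ = λ(c)ψ′ for all c ∈ C. Then for every e ∈ Z_p^{2n} with e ∉ C^⊥, ⟨ψ′, XZ(e)ψ⟩ = 0; that is, an error outside C^⊥ maps the stabilizer code into an orthogonal eigenspace. -/

import Mathlib

/-!
Pick `c ∈ C` with `⟨c, e⟩ ≠ 0`. The commutation relation `XZ(c) XZ(e) = ω^⟨c,e⟩ XZ(e) XZ(c)`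
makes `XZ(e) ψ` an eigenvector of `XZ(c)` for the eigenvalue `ω^⟨c,e⟩ λ(c)`, while `ψ'` is one
for `λ(c)`. Since `XZ(c)` is unitary, `λ(c) ≠ 0` and eigenvectors for distinct eigenvalues are
orthogonal. The commutation relation and unitarity are checked factor by factor, `XZ(u)` being
the Kronecker product of the single-qudit matrices `X^a Z^b`.
-/

open scoped BigOperators
open Matrix

/-- `omg p` is the complex primitive `p`-th root of unity `exp(2πi/p)`. -/
noncomputable def omg (p : ℕ) : ℂ := Complex.exp (2 * Real.pi * Complex.I / p)

/-- The generalized Pauli matrix `XZ(u) = X^{a_1}Z^{b_1} ⊗ ⋯ ⊗ X^{a_n}Z^{b_n}`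
for `u = ((a_1,b_1),…,(a_n,b_n)) ∈ (Z_p²)ⁿ`, written out entrywise with respect to the
computational basis of `(ℂ^p)^{⊗n} ≃ ℂ^{p^n}`, whose coordinates are indexed by
`Fin n → ZMod p`.  (It is the matrix determined by
`XZ(u) |i₁ … iₙ⟩ = ∏_t ω^{b_t i_t} |i₁+a₁, …, iₙ+aₙ⟩`.) -/
noncomputable def XZ (p n : ℕ) (u : Fin n → ZMod p × ZMod p) :
    Matrix (Fin n → ZMod p) (Fin n → ZMod p) ℂ :=
  fun j i => ∏ t : Fin n, if j t = i t + (u t).1 then omg p ^ ((u t).2 * i t).val else 0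

/-- The symplectic inner product `⟨u,v⟩ = Σ b_i c_i − a_i d_i` on `Z_p^{2n}`. -/
def symp (p n : ℕ) (u v : Fin n → ZMod p × ZMod p) : ZMod p :=
  ∑ t : Fin n, ((u t).2 * (v t).1 - (u t).1 * (v t).2)

/-- The standard Hermitian inner product on `I → ℂ`. -/
noncomputable def cinner {I : Type*} [Fintype I] (x y : I → ℂ) : ℂ :=
  ∑ i, (starRingEnd ℂ) (x i) * y i

namespace Matrix

variable {ι α β γ R : Type*} [Fintype ι]

def piKronecker [CommSemiring R] (M : ι → Matrix α β R) : Matrix (ι → α) (ι → β) R :=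
  of fun j i => ∏ t, M t (j t) (i t)

@[simp]
theorem piKronecker_apply [CommSemiring R] (M : ι → Matrix α β R) (j : ι → α) (i : ι → β) :
    piKronecker M j i = ∏ t, M t (j t) (i t) := rfl

theorem piKronecker_mul [DecidableEq ι] [CommSemiring R] [Fintype β] [DecidableEq β]
    (M : ι → Matrix α β R) (N : ι → Matrix β γ R) :
    piKronecker M * piKronecker N = piKronecker fun t => M t * N t := by
  ext j i
  simp only [mul_apply, piKronecker_apply, ← Finset.prod_mul_distrib]
  exact (Fintype.prod_sum fun t x => M t (j t) x * N t x (i t)).symm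

theorem piKronecker_one [CommSemiring R] [DecidableEq α] :
    piKronecker (fun _ : ι => (1 : Matrix α α R)) = 1 := by
  ext j i
  simp only [piKronecker_apply, one_apply, Fintype.prod_boole, funext_iff]

theorem piKronecker_smul [CommSemiring R] (c : ι → R) (M : ι → Matrix α β R) :
    piKronecker (fun t => c t • M t) = (∏ t, c t) • piKronecker M := by
  ext j i
  simp only [piKronecker_apply, smul_apply, smul_eq_mul, Finset.prod_mul_distrib]

theorem conjTranspose_piKronecker [CommSemiring R] [StarRing R] (M : ι → Matrix α β R) :
    (piKronecker M)ᴴ = piKronecker fun t => (M t)ᴴ := by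
  ext j i
  simp only [conjTranspose_apply, piKronecker_apply, star_prod]

end Matrix

theorem AddChar.map_sum_eq_prod {ι A M : Type*} [AddCommMonoid A] [CommMonoid M]
    (ψ : AddChar A M) (s : Finset ι) (f : ι → A) :
    ψ (∑ i ∈ s, f i) = ∏ i ∈ s, ψ (f i) := by
  classical
  induction s using Finset.induction with
  | empty => simp
  | insert a s ha ih => rw [Finset.prod_insert ha, Finset.sum_insert ha, map_add_eq_mul, ih]

namespace ZMod

variable {N : ℕ} [NeZero N]

/-- The single-qudit Pauli matrix `X^a Z^b`. -/
noncomputable def quditXZ (a b : ZMod N) : Matrix (ZMod N) (ZMod N) ℂ :=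
  of fun j i => if j = i + a then stdAddChar (b * i) else 0

theorem quditXZ_mul (a b c d : ZMod N) :
    quditXZ a b * quditXZ c d =
      of fun j i => if j = i + c + a then stdAddChar (b * (i + c) + d * i) else 0 := by
  ext j i
  rw [mul_apply, Finset.sum_eq_single (i + c)]
  · simp [quditXZ, AddChar.map_add_eq_mul]
  · intro k _ hk
    simp [quditXZ, hk]
  · simp

theorem quditXZ_mul_comm (a b c d : ZMod N) :
    quditXZ a b * quditXZ c d = stdAddChar (b * c - a * d) • (quditXZ c d * quditXZ a b) := by
  ext j i
  simp only [quditXZ_mul, Matrix.smul_apply, of_apply, smul_eq_mul, mul_ite, mul_zero,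
    ← AddChar.map_add_eq_mul, add_right_comm i c a]
  congr 2
  ring

theorem conjTranspose_quditXZ_mul_self (a b : ZMod N) :
    (quditXZ a b)ᴴ * quditXZ a b = 1 := by
  ext j i
  rw [mul_apply, Finset.sum_eq_single (i + a)]
  · by_cases h : j = i
    · simp [quditXZ, h, ← AddChar.map_neg_eq_conj, ← AddChar.map_add_eq_mul, one_apply]
    · simp [quditXZ, h, Ne.symm h]
  · intro k _ hk
    simp [quditXZ, hk]
  · simp

end ZMod

open ZMod

section Pauli

variable {p n : ℕ} [NeZero p]

theorem omg_pow_val (s : ZMod p) : omg p ^ s.val = stdAddChar s := by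
  rw [stdAddChar_apply, toCircle_apply, omg, ← Complex.exp_nat_mul]
  congr 1
  ring

theorem XZ_eq_piKronecker (u : Fin n → ZMod p × ZMod p) :
    XZ p n u = piKronecker fun t => quditXZ (u t).1 (u t).2 := by
  ext j i
  simp [XZ, quditXZ, omg_pow_val]

theorem XZ_mul_comm (u v : Fin n → ZMod p × ZMod p) :
    XZ p n u * XZ p n v = stdAddChar (symp p n u v) • (XZ p n v * XZ p n u) := by
  rw [XZ_eq_piKronecker, XZ_eq_piKronecker, piKronecker_mul, piKronecker_mul, symp,
    AddChar.map_sum_eq_prod, ← piKronecker_smul]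
  exact congrArg _ (funext fun t => quditXZ_mul_comm _ _ _ _)

theorem conjTranspose_XZ_mul_self (u : Fin n → ZMod p × ZMod p) :
    (XZ p n u)ᴴ * XZ p n u = 1 := by
  simp only [XZ_eq_piKronecker, conjTranspose_piKronecker, piKronecker_mul,
    conjTranspose_quditXZ_mul_self, piKronecker_one]

end Pauli

section Eigenvectors

variable {I : Type*} [Fintype I]

theorem cinner_eq_star_dotProduct (x y : I → ℂ) : cinner x y = star x ⬝ᵥ y := rfl

theorem cinner_smul_smul (a b : ℂ) (x y : I → ℂ) :
    cinner (a • x) (b • y) = star a * b * cinner x y := by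
  simp only [cinner_eq_star_dotProduct, star_smul, smul_dotProduct, dotProduct_smul,
    smul_eq_mul]
  ring

variable [DecidableEq I]

theorem cinner_mulVec_mulVec {U : Matrix I I ℂ} (hU : Uᴴ * U = 1) (x y : I → ℂ) :
    cinner (U *ᵥ x) (U *ᵥ y) = cinner x y := by
  rw [cinner_eq_star_dotProduct, cinner_eq_star_dotProduct, star_mulVec,
    ← dotProduct_mulVec, mulVec_mulVec, hU, one_mulVec]

open scoped ComplexOrder in
theorem star_mul_self_eq_one_of_mulVec_eq_smul {U : Matrix I I ℂ} (hU : Uᴴ * U = 1)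
    {x : I → ℂ} {a : ℂ} (hx : U *ᵥ x = a • x) (hx0 : x ≠ 0) : star a * a = 1 := by
  have h := cinner_mulVec_mulVec hU x x
  rw [hx, cinner_smul_smul] at h
  have hxx : cinner x x ≠ 0 := by
    rwa [cinner_eq_star_dotProduct, Ne, dotProduct_star_self_eq_zero]
  exact mul_right_cancel₀ hxx (h.trans (one_mul _).symm)

theorem eq_of_cinner_ne_zero_of_mulVec_eq_smul {U : Matrix I I ℂ} (hU : Uᴴ * U = 1)
    {x y : I → ℂ} {a b : ℂ} (hx : U *ᵥ x = a • x) (hy : U *ᵥ y = b • y)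
    (hxy : cinner x y ≠ 0) : a = b := by
  have hx0 : x ≠ 0 := by rintro rfl; simp [cinner] at hxy
  have h := cinner_mulVec_mulVec hU x y
  rw [hx, hy, cinner_smul_smul] at h
  have hab : star a * b = star a * a :=
    (mul_right_cancel₀ hxy (h.trans (one_mul _).symm)).trans
      (star_mul_self_eq_one_of_mulVec_eq_smul hU hx hx0).symm
  exact (mul_left_cancel₀ (left_ne_zero_of_mul_eq_one
    (star_mul_self_eq_one_of_mulVec_eq_smul hU hx hx0)) hab).symm

end Eigenvectors

/-- An error `XZ(e)` with `e ∉ C^⊥` maps the stabilizer code (joint eigenspace with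
eigenvalues `λ`) into an orthogonal eigenspace: `⟨ψ′, XZ(e)ψ⟩ = 0`. -/
theorem error_outside_perp_orthogonal (p n : ℕ) [Fact p.Prime]
    (C : Submodule (ZMod p) (Fin n → ZMod p × ZMod p)) (lam : C → ℂ)
    (ψ ψ' : (Fin n → ZMod p) → ℂ)
    (hψ : ∀ c : C, XZ p n c.val *ᵥ ψ = lam c • ψ)
    (hψ' : ∀ c : C, XZ p n c.val *ᵥ ψ' = lam c • ψ')
    (e : Fin n → ZMod p × ZMod p) (he : ¬ ∀ c ∈ C, symp p n c e = 0) :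
    cinner ψ' (XZ p n e *ᵥ ψ) = 0 := by
  push Not at he
  obtain ⟨c, hc, hce⟩ := he
  set U := XZ p n c
  have hU : Uᴴ * U = 1 := conjTranspose_XZ_mul_self c
  have hUeψ : U *ᵥ (XZ p n e *ᵥ ψ) =
      (stdAddChar (symp p n c e) * lam ⟨c, hc⟩) • (XZ p n e *ᵥ ψ) := by
    rw [mulVec_mulVec, XZ_mul_comm, smul_mulVec, ← mulVec_mulVec,
      hψ ⟨c, hc⟩, mulVec_smul, smul_smul]
  by_contra h
  have hlam := eq_of_cinner_ne_zero_of_mulVec_eq_smul hU (hψ' ⟨c, hc⟩) hUeψ h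
  have hψ'0 : ψ' ≠ 0 := by rintro rfl; simp [cinner] at h
  have hlam0 : lam ⟨c, hc⟩ ≠ 0 := right_ne_zero_of_mul_eq_one
    (star_mul_self_eq_one_of_mulVec_eq_smul hU (hψ' ⟨c, hc⟩) hψ'0)
  have hchar : stdAddChar (symp p n c e) = 1 :=
    (mul_right_cancel₀ hlam0 ((one_mul _).trans hlam)).symm
  exact hce (injective_stdAddChar (hchar.trans (AddChar.map_zero_eq_one _).symm))
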